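/- arXiv:2603.28256 — 6 statements merged into one kernel-verified Lean document; each statement's English description precedes it below -/
import Mathlib

section
/- Let f : ℝ → ℝ be twice continuously differentiable on (0,1] with f(y) > 0 and f'(y) > 0 for all y ∈ (0,1], and suppose f(y) → 0 as y → 0⁺. Define T_{1/f}(y) := f''(y)/f'(y) − 2 f'(y)/f(y). Then the integral of y·T_{1/f}(y)² over (0,1) is infinite, i.e., ∫⁻_{(0,1)} ENNReal.ofReal( y·T_{1/f}(y)² ) dy = ∞. -/
open Set MeasureTheory Filter Topology

/-!
With `ψ = log f - y f'/f`, one has `ψ' = y (f'² - f f'') / f²` and the pointwise identity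
`y T_{1/f}² = y T_f² + 4 ψ'`. Dropping `y T_f² ≥ 0` and integrating over `[ε, 1]` gives
`∫_ε^1 y T_{1/f}² ≥ 4 (ψ 1 - ψ ε)`, and `ψ ε ≤ log f(ε) → -∞` as `ε → 0⁺`.
-/

noncomputable def logPotential (f f' : ℝ → ℝ) (y : ℝ) : ℝ :=
  Real.log (f y) - y * f' y / f y

theorem mul_sq_div_sub_two_mul_div (y a b c : ℝ) (ha : a ≠ 0) (hb : b ≠ 0) :
    y * (c / b - 2 * b / a) ^ 2 = y * (c / b) ^ 2 + 4 * (y * (b ^ 2 - a * c) / a ^ 2) := by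
  field_simp
  ring

theorem hasDerivWithinAt_logPotential {f f' f'' : ℝ → ℝ} {s : Set ℝ} {y : ℝ}
    (hf : HasDerivWithinAt f (f' y) s y) (hf' : HasDerivWithinAt f' (f'' y) s y)
    (hy : f y ≠ 0) :
    HasDerivWithinAt (logPotential f f') (y * (f' y ^ 2 - f y * f'' y) / f y ^ 2) s y := by
  have h : HasDerivWithinAt (logPotential f f')
      (f' y / f y - ((1 * f' y + y * f'' y) * f y - y * f' y * f' y) / f y ^ 2) s y :=
    (hf.log hy).sub (((hasDerivWithinAt_id y s).mul hf').div hf hy)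
  refine h.congr_deriv ?_
  field_simp
  ring

theorem logPotential_le_log {f f' : ℝ → ℝ} {y : ℝ} (hy : 0 ≤ y) (hf : 0 < f y)
    (hf' : 0 ≤ f' y) : logPotential f f' y ≤ Real.log (f y) :=
  sub_le_self _ (div_nonneg (mul_nonneg hy hf') hf.le)

theorem tendsto_logPotential_nhdsGT_zero_atBot {f f' : ℝ → ℝ}
    (hfpos : ∀ y ∈ Ioc (0 : ℝ) 1, 0 < f y) (hf'pos : ∀ y ∈ Ioc (0 : ℝ) 1, 0 < f' y)
    (hlim : Tendsto f (𝓝[>] 0) (𝓝 0)) :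
    Tendsto (logPotential f f') (𝓝[>] 0) atBot := by
  have hIoc : ∀ᶠ y in 𝓝[>] (0 : ℝ), y ∈ Ioc (0 : ℝ) 1 := Ioc_mem_nhdsGT zero_lt_one
  have hf : Tendsto f (𝓝[>] 0) (𝓝[>] 0) :=
    tendsto_nhdsWithin_iff.2 ⟨hlim, hIoc.mono hfpos⟩
  refine tendsto_atBot_mono' _ ?_ (Real.tendsto_log_nhdsGT_zero.comp hf)
  filter_upwards [hIoc] with y hy
  exact logPotential_le_log hy.1.le (hfpos y hy) (hf'pos y hy).le

theorem ofReal_sub_le_lintegral_of_deriv_le {g g' I : ℝ → ℝ} {a b : ℝ} (hab : a ≤ b)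
    (hg : ContinuousOn g (Icc a b)) (hderiv : ∀ x ∈ Ioo a b, HasDerivAt g (g' x) x)
    (hg' : IntervalIntegrable g' volume a b) (hI : IntegrableOn I (Ioo a b))
    (hle : ∀ x ∈ Ioo a b, g' x ≤ I x) (hI0 : ∀ x ∈ Ioo a b, 0 ≤ I x) :
    ENNReal.ofReal (g b - g a) ≤ ∫⁻ x in Ioo a b, ENNReal.ofReal (I x) := by
  have hftc : g b - g a = ∫ x in Ioo a b, g' x := by
    rw [← intervalIntegral.integral_eq_sub_of_hasDerivAt_of_le hab hg hderiv hg',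
      intervalIntegral.integral_of_le hab, integral_Ioc_eq_integral_Ioo]
  have hmono : ∫ x in Ioo a b, g' x ≤ ∫ x in Ioo a b, I x :=
    setIntegral_mono_on ((hg'.1).mono_set Ioo_subset_Ioc_self) hI measurableSet_Ioo hle
  rw [← ofReal_integral_eq_lintegral_ofReal hI
    ((ae_restrict_iff' measurableSet_Ioo).2 (Eventually.of_forall hI0))]
  exact ENNReal.ofReal_le_ofReal (hftc ▸ hmono)

theorem eq_top_of_tendsto_atTop_of_ofReal_le {l : Filter ℝ} [l.NeBot] {g : ℝ → ℝ}
    {L : ENNReal} (hg : Tendsto g l atTop) (hle : ∀ᶠ x in l, ENNReal.ofReal (g x) ≤ L) :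
    L = ⊤ :=
  top_le_iff.1 (le_of_tendsto (ENNReal.tendsto_ofReal_atTop.comp hg) hle)

theorem ofReal_logPotential_sub_le_lintegral {f f' f'' : ℝ → ℝ}
    (hf' : ∀ y ∈ Ioc (0 : ℝ) 1, HasDerivWithinAt f (f' y) (Ioc (0 : ℝ) 1) y)
    (hf'' : ∀ y ∈ Ioc (0 : ℝ) 1, HasDerivWithinAt f' (f'' y) (Ioc (0 : ℝ) 1) y)
    (hcont : ContinuousOn f'' (Ioc (0 : ℝ) 1))
    (hfpos : ∀ y ∈ Ioc (0 : ℝ) 1, 0 < f y) (hf'pos : ∀ y ∈ Ioc (0 : ℝ) 1, 0 < f' y)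
    {ε : ℝ} (hε : ε ∈ Ioc (0 : ℝ) 1) :
    ENNReal.ofReal (4 * (logPotential f f' 1 - logPotential f f' ε)) ≤
      ∫⁻ y in Ioo (0 : ℝ) 1, ENNReal.ofReal (y * (f'' y / f' y - 2 * f' y / f y) ^ 2) := by
  set s := Ioc (0 : ℝ) 1
  set ψ' : ℝ → ℝ := fun y => y * (f' y ^ 2 - f y * f'' y) / f y ^ 2
  have hsub : Icc ε 1 ⊆ s := fun y hy => ⟨hε.1.trans_le hy.1, hy.2⟩
  have hf0 : ∀ y ∈ s, f y ≠ 0 := fun y hy => (hfpos y hy).ne'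
  have hψ : ∀ y ∈ s, HasDerivWithinAt (logPotential f f') (ψ' y) s y := fun y hy =>
    hasDerivWithinAt_logPotential (hf' y hy) (hf'' y hy) (hf0 y hy)
  have hfc : ContinuousOn f s := fun y hy => (hf' y hy).continuousWithinAt
  have hf'c : ContinuousOn f' s := fun y hy => (hf'' y hy).continuousWithinAt
  have hψc : ContinuousOn (logPotential f f') s := fun y hy => (hψ y hy).continuousWithinAt
  have hψ'c : ContinuousOn ψ' s :=
    (continuousOn_id.mul ((hf'c.pow 2).sub (hfc.mul hcont))).div (hfc.pow 2)
      fun y hy => pow_ne_zero 2 (hf0 y hy)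
  have hIc : ContinuousOn (fun y => y * (f'' y / f' y - 2 * f' y / f y) ^ 2) s :=
    continuousOn_id.mul (((hcont.div hf'c fun y hy => (hf'pos y hy).ne').sub
      ((continuousOn_const.mul hf'c).div hfc hf0)).pow 2)
  have hbound : ∀ y ∈ s, 4 * ψ' y ≤ y * (f'' y / f' y - 2 * f' y / f y) ^ 2 := by
    intro y hy
    rw [mul_sq_div_sub_two_mul_div y (f y) (f' y) (f'' y) (hf0 y hy) (hf'pos y hy).ne']
    exact le_add_of_nonneg_left (mul_nonneg hy.1.le (sq_nonneg _))
  have hIoo : Ioo ε 1 ⊆ s := Ioo_subset_Icc_self.trans hsub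
  rw [mul_sub]
  refine (ofReal_sub_le_lintegral_of_deriv_le (g := fun y => 4 * logPotential f f' y)
    (g' := fun y => 4 * ψ' y) hε.2 (continuousOn_const.mul (hψc.mono hsub))
    (fun y hy => ((hψ y (hIoo hy)).hasDerivAt
      (Ioc_mem_nhds (hε.1.trans hy.1) hy.2)).const_mul 4)
    ((continuousOn_const.mul (hψ'c.mono hsub)).intervalIntegrable_of_Icc hε.2)
    ((hIc.mono hsub).integrableOn_Icc.mono_set Ioo_subset_Icc_self)
    (fun y hy => hbound y (hIoo hy))
    (fun y hy => mul_nonneg (hε.1.trans hy.1).le (sq_nonneg _))).trans ?_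
  exact lintegral_mono_set (Ioo_subset_Ioo_left hε.1.le)

/-- If `f` is twice continuously differentiable on `(0,1]` with `f > 0`, `f' > 0`
there, and `f(y) → 0` as `y → 0⁺`, then `∫_0^1 y · T_{1/f}(y)² dy = ∞`, where
`T_{1/f} = f''/f' - 2 f'/f`. -/
theorem stmt1 (f f' f'' : ℝ → ℝ)
    (hf' : ∀ y ∈ Set.Ioc (0:ℝ) 1, HasDerivWithinAt f (f' y) (Set.Ioc (0:ℝ) 1) y)
    (hf'' : ∀ y ∈ Set.Ioc (0:ℝ) 1, HasDerivWithinAt f' (f'' y) (Set.Ioc (0:ℝ) 1) y)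
    (hcont : ContinuousOn f'' (Set.Ioc (0:ℝ) 1))
    (hfpos : ∀ y ∈ Set.Ioc (0:ℝ) 1, 0 < f y)
    (hf'pos : ∀ y ∈ Set.Ioc (0:ℝ) 1, 0 < f' y)
    (hlim : Filter.Tendsto f (nhdsWithin 0 (Set.Ioi 0)) (nhds 0)) :
    ∫⁻ y in Set.Ioo (0:ℝ) 1,
        ENNReal.ofReal (y * (f'' y / f' y - 2 * f' y / f y) ^ 2) = ⊤ := by
  refine eq_top_of_tendsto_atTop_of_ofReal_le (l := 𝓝[>] 0)
    (g := fun ε => 4 * (logPotential f f' 1 - logPotential f f' ε)) ?_ ?_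
  · have hψ := tendsto_logPotential_nhdsGT_zero_atBot hfpos hf'pos hlim
    simpa only [sub_eq_add_neg, Function.comp_apply] using
      (tendsto_atTop_add_const_left _ (logPotential f f' 1)
        (tendsto_neg_atBot_atTop.comp hψ)).const_mul_atTop four_pos
  · filter_upwards [Ioc_mem_nhdsGT zero_lt_one] with ε hε
    exact ofReal_logPotential_sub_le_lintegral hf' hf'' hcont hfpos hf'pos hε
end

section
/- Let f : ℝ → ℝ be twice continuously differentiable on (0,1] with f(y) > 0 and f'(y) < 0 for all y ∈ (0,1], and suppose f(y) → +∞ as y → 0⁺. Define T_f(y) := f''(y)/f'(y). Then the integral of y·T_f(y)² over (0,1) is infinite, i.e., ∫⁻_{(0,1)} ENNReal.ofReal( y·T_f(y)² ) dy = ∞. -/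
open Set MeasureTheory Filter Topology

/-!
With `u = f'/f`, one has `T_f² - (T_f - 2u)² = 4u'`, and `T_f - 2u = T_{1/f}`. Hence
`y T_f² ≥ 4 y u' = 4 (y u - log f)'`, so `∫_ε^1 y T_f² ≥ 4 (u(1) - log f(1)) - 4 ε u(ε) + 4 log f(ε)`.
Since `u < 0`, the middle term is nonnegative, and `log f(ε) → ∞` as `ε → 0⁺`.
-/

theorem four_mul_sub_div_sq_le_div_sq {a b c : ℝ} (ha : a ≠ 0) (hb : b ≠ 0) :
    4 * ((c * a - b * b) / a ^ 2) ≤ (c / b) ^ 2 := by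
  have key : (c / b) ^ 2 - 4 * ((c * a - b * b) / a ^ 2) = (c / b - 2 * (b / a)) ^ 2 := by
    field_simp
    ring
  nlinarith [sq_nonneg (c / b - 2 * (b / a))]

theorem hasDerivAt_mul_div_sub_log {f f' : ℝ → ℝ} {x c : ℝ} (hf : HasDerivAt f (f' x) x)
    (hf' : HasDerivAt f' c x) (hx : f x ≠ 0) :
    HasDerivAt (fun y => y * (f' y / f y) - Real.log (f y))
      (x * ((c * f x - f' x * f' x) / f x ^ 2)) x :=
  (((hasDerivAt_id' x).mul (hf'.div hf hx)).sub (hf.log hx)).congr_deriv <| by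
    rw [Pi.div_apply]
    ring

theorem ofReal_sub_le_lintegral_mul_div_sq {f f' f'' : ℝ → ℝ} {a b : ℝ} (ha : 0 ≤ a)
    (hab : a ≤ b) (hcf : ContinuousOn f (Icc a b)) (hcf' : ContinuousOn f' (Icc a b))
    (hcf'' : ContinuousOn f'' (Icc a b)) (hf : ∀ x ∈ Ioo a b, HasDerivAt f (f' x) x)
    (hf' : ∀ x ∈ Ioo a b, HasDerivAt f' (f'' x) x) (hf0 : ∀ x ∈ Icc a b, f x ≠ 0)
    (hf'0 : ∀ x ∈ Icc a b, f' x ≠ 0) :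
    ENNReal.ofReal (4 * ((b * (f' b / f b) - Real.log (f b)) -
        (a * (f' a / f a) - Real.log (f a)))) ≤
      ∫⁻ y in Ioo a b, ENNReal.ofReal (y * (f'' y / f' y) ^ 2) := by
  set φ : ℝ → ℝ := fun y => y * ((f'' y * f y - f' y * f' y) / f y ^ 2)
  set T : ℝ → ℝ := fun y => y * (f'' y / f' y) ^ 2
  have hφcont : ContinuousOn φ (Icc a b) :=
    continuousOn_id.mul <| ((hcf''.mul hcf).sub (hcf'.mul hcf')).div (hcf.pow 2)
      fun y hy => pow_ne_zero 2 (hf0 y hy)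
  have hTcont : ContinuousOn T (Icc a b) := continuousOn_id.mul ((hcf''.div hcf' hf'0).pow 2)
  have hftc : ∫ y in a..b, φ y = (b * (f' b / f b) - Real.log (f b)) -
      (a * (f' a / f a) - Real.log (f a)) :=
    intervalIntegral.integral_eq_sub_of_hasDerivAt_of_le hab
      ((continuousOn_id.mul (hcf'.div hcf hf0)).sub (hcf.log hf0))
      (fun x hx => hasDerivAt_mul_div_sub_log (hf x hx) (hf' x hx) (hf0 x (Ioo_subset_Icc_self hx)))
      (hφcont.intervalIntegrable_of_Icc hab)
  have hφT : ∀ y ∈ Ioo a b, 4 * φ y ≤ T y := fun y hy => by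
    have hy := Ioo_subset_Icc_self hy
    simpa only [φ, T, mul_left_comm] using mul_le_mul_of_nonneg_left
      (four_mul_sub_div_sq_le_div_sq (c := f'' y) (hf0 y hy) (hf'0 y hy)) (ha.trans hy.1)
  have hTint : IntegrableOn T (Ioo a b) := (hTcont.integrableOn_Icc).mono_set Ioo_subset_Icc_self
  have hTnonneg : 0 ≤ᵐ[volume.restrict (Ioo a b)] T := by
    filter_upwards [ae_restrict_mem measurableSet_Ioo] with y hy
    have : 0 ≤ y := ha.trans hy.1.le
    positivity
  calc ENNReal.ofReal (4 * ((b * (f' b / f b) - Real.log (f b)) -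
        (a * (f' a / f a) - Real.log (f a))))
      = ENNReal.ofReal (∫ y in Ioo a b, 4 * φ y) := by
        rw [integral_const_mul, ← integral_Ioc_eq_integral_Ioo,
          ← intervalIntegral.integral_of_le hab, hftc]
    _ ≤ ENNReal.ofReal (∫ y in Ioo a b, T y) :=
        ENNReal.ofReal_le_ofReal <| setIntegral_mono_on
          (((hφcont.integrableOn_Icc).mono_set Ioo_subset_Icc_self).const_mul 4) hTint
          measurableSet_Ioo hφT
    _ = ∫⁻ y in Ioo a b, ENNReal.ofReal (T y) :=
        ofReal_integral_eq_lintegral_ofReal hTint hTnonneg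

/-- If `f` is twice continuously differentiable on `(0,1]` with `f > 0`, `f' < 0`
there, and `f(y) → +∞` as `y → 0⁺`, then `∫_0^1 y · T_f(y)² dy = ∞`, where
`T_f = f''/f'`. -/
theorem stmt2 (f f' f'' : ℝ → ℝ)
    (hf' : ∀ y ∈ Set.Ioc (0:ℝ) 1, HasDerivWithinAt f (f' y) (Set.Ioc (0:ℝ) 1) y)
    (hf'' : ∀ y ∈ Set.Ioc (0:ℝ) 1, HasDerivWithinAt f' (f'' y) (Set.Ioc (0:ℝ) 1) y)
    (hcont : ContinuousOn f'' (Set.Ioc (0:ℝ) 1))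
    (hfpos : ∀ y ∈ Set.Ioc (0:ℝ) 1, 0 < f y)
    (hf'neg : ∀ y ∈ Set.Ioc (0:ℝ) 1, f' y < 0)
    (hlim : Filter.Tendsto f (nhdsWithin 0 (Set.Ioi 0)) Filter.atTop) :
    ∫⁻ y in Set.Ioo (0:ℝ) 1,
        ENNReal.ofReal (y * (f'' y / f' y) ^ 2) = ⊤ := by
  set H : ℝ → ℝ := fun y => y * (f' y / f y) - Real.log (f y)
  have hbound : ∀ ε ∈ Ioo (0:ℝ) 1, ENNReal.ofReal (4 * (H 1 - H ε)) ≤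
      ∫⁻ y in Ioo (0:ℝ) 1, ENNReal.ofReal (y * (f'' y / f' y) ^ 2) := fun ε hε => by
    have hsub : Icc ε 1 ⊆ Ioc 0 1 := Icc_subset_Ioc_iff hε.2.le |>.2 ⟨hε.1, le_rfl⟩
    have hderiv {g g' : ℝ → ℝ} (hg : ∀ y ∈ Ioc (0:ℝ) 1, HasDerivWithinAt g (g' y) (Ioc 0 1) y) :
        ∀ x ∈ Ioo ε 1, HasDerivAt g (g' x) x := fun x hx =>
      (hg x (hsub (Ioo_subset_Icc_self hx))).hasDerivAt (Ioc_mem_nhds (hε.1.trans hx.1) hx.2)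
    refine (ofReal_sub_le_lintegral_mul_div_sq hε.1.le hε.2.le
      (fun x hx => (hf' x (hsub hx)).continuousWithinAt.mono hsub)
      (fun x hx => (hf'' x (hsub hx)).continuousWithinAt.mono hsub) (hcont.mono hsub)
      (hderiv hf') (hderiv hf'') (fun x hx => (hfpos x (hsub hx)).ne')
      (fun x hx => (hf'neg x (hsub hx)).ne)).trans ?_
    exact lintegral_mono_set (Ioo_subset_Ioo_left hε.1.le)
  have hIoo : ∀ᶠ ε in 𝓝[>] (0:ℝ), ε ∈ Ioo (0:ℝ) 1 := Ioo_mem_nhdsGT one_pos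
  have hH : Tendsto (fun ε => 4 * (H 1 - H ε)) (𝓝[>] 0) atTop := by
    refine tendsto_atTop_mono' _ ?_ <|
      ((Real.tendsto_log_atTop.comp hlim).atTop_add (tendsto_const_nhds (x := H 1))).const_mul_atTop
        four_pos
    filter_upwards [hIoo] with ε hε
    have hε' : ε ∈ Ioc (0:ℝ) 1 := Ioo_subset_Ioc_self hε
    have : ε * (f' ε / f ε) ≤ 0 :=
      mul_nonpos_of_nonneg_of_nonpos hε.1.le (div_neg_of_neg_of_pos (hf'neg ε hε') (hfpos ε hε')).le
    simp only [Function.comp_apply, H]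
    linarith
  exact top_unique <| le_of_tendsto (ENNReal.tendsto_ofReal_atTop.comp hH) <|
    hIoo.mono hbound
end

section
/- Let κ : ℝ → ℝ be a continuous nondecreasing function with κ(u) = κ(0) for u ≤ 0, let S : ℝ → ℝ be continuous with S(u) > 0 for all u ≥ 0, and let n₀ > 0. Define n(t) := n₀·exp( −∫_{(0,t]} S(u)^{−1} d(μ_κ)(u) ) for t ≥ 0, where μ_κ is the Lebesgue–Stieltjes measure of κ. Then for every t ≥ 0, n₀ − n(t) = ∫_{(0,t]} ( n(u)/S(u) ) d(μ_κ)(u). -/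
/-!
Write `G u = ∫_{(0,u]} S⁻¹ dμ_κ`. Since `κ` is continuous, `μ_κ` has no atoms, so `G` is
continuous and nondecreasing on `[0,t]`, and the image of the measure `S⁻¹ dμ_κ` on `(0,t]`
under `G` is Lebesgue measure on `(0, G t]`: the part of `(0,t]` where `G ≤ s` is an interval
`(0,d]` with `G d = s`.
Hence `∫_{(0,t]} e^{-G} S⁻¹ dμ_κ = ∫_0^{G t} e^{-x} dx = 1 - e^{-G t}`.
-/

open Set MeasureTheory
open scoped ENNReal

theorem ContinuousOn.exists_Ioc_inter_preimage_Iic_eq {F : ℝ → ℝ} {a b s : ℝ}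
    (hab : a ≤ b) (hFc : ContinuousOn F (Icc a b)) (hFm : MonotoneOn F (Icc a b))
    (hs : F a ≤ s) :
    ∃ d ∈ Icc a b, F d = min s (F b) ∧ Ioc a b ∩ F ⁻¹' Iic s = Ioc a d := by
  have hlevel : min s (F b) ∈ F '' Icc a b :=
    intermediate_value_Icc hab hFc
      ⟨le_min hs (hFm ⟨le_rfl, hab⟩ ⟨hab, le_rfl⟩ hab), min_le_right _ _⟩
  have hcpt : IsCompact (Icc a b ∩ F ⁻¹' {min s (F b)}) :=
    isCompact_Icc.of_isClosed_subset
      (hFc.preimage_isClosed_of_isClosed isClosed_Icc isClosed_singleton) inter_subset_left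
  obtain ⟨d, ⟨hd, hFd⟩, hgreatest⟩ := hcpt.exists_isGreatest hlevel
  refine ⟨d, hd, hFd, Set.ext fun u => ⟨fun ⟨hu, hFu⟩ => ⟨hu.1, ?_⟩, fun hu => ?_⟩⟩
  · by_contra! hdu
    have hu' : u ∈ Icc a b := Ioc_subset_Icc_self hu
    have : F u = min s (F b) :=
      le_antisymm (le_min hFu (hFm hu' ⟨hab, le_rfl⟩ hu.2)) (hFd ▸ hFm hd hu' hdu.le)
    exact hdu.not_ge (hgreatest ⟨hu', this⟩)
  · have hu' : u ∈ Icc a b := ⟨hu.1.le, hu.2.trans hd.2⟩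
    exact ⟨⟨hu.1, hu.2.trans hd.2⟩, (hFm hu' hd hu.2).trans (hFd ▸ min_le_left _ _)⟩

theorem map_restrict_Ioc_eq_volume_restrict {ρ : Measure ℝ} {F : ℝ → ℝ} {a b : ℝ}
    (hab : a ≤ b) (hFc : ContinuousOn F (Icc a b)) (hFm : MonotoneOn F (Icc a b))
    (hρ : ∀ x ∈ Icc a b, ρ (Ioc a x) = ENNReal.ofReal (F x - F a)) :
    (ρ.restrict (Ioc a b)).map F = volume.restrict (Ioc (F a) (F b)) := by
  refine (Measure.ext_of_Iic _ _ fun s => ?_).symm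
  rw [Measure.map_apply_of_aemeasurable
      ((hFc.mono Ioc_subset_Icc_self).aemeasurable measurableSet_Ioc) measurableSet_Iic,
    Measure.restrict_apply measurableSet_Iic, Measure.restrict_apply' measurableSet_Ioc,
    inter_comm _ (Ioc a b), inter_comm (Iic s), Ioc_inter_Iic]
  rcases lt_or_ge s (F a) with hs | hs
  · have hempty : Ioc a b ∩ F ⁻¹' Iic s = ∅ :=
      eq_empty_of_forall_notMem fun u ⟨hu, hus⟩ =>
        hs.not_ge ((hFm ⟨le_rfl, hab⟩ (Ioc_subset_Icc_self hu) hu.1.le).trans hus)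
    rw [hempty, Ioc_eq_empty (inf_le_right.trans_lt hs).not_gt, measure_empty, measure_empty]
  · obtain ⟨d, hd, hFd, hpre⟩ := hFc.exists_Ioc_inter_preimage_Iic_eq hab hFm hs
    rw [hpre, hρ d hd, Real.volume_Ioc, hFd, inf_comm]

theorem setIntegral_smul_comp_primitive {E : Type*} [NormedAddCommGroup E] [NormedSpace ℝ E]
    {μ : Measure ℝ} [NullSingletonClass μ] {f : ℝ → ℝ} {g : ℝ → E} {a b : ℝ}
    (hab : a ≤ b) (hf : IntegrableOn f (Icc a b) μ) (hf₀ : ∀ u ∈ Ioc a b, 0 ≤ f u)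
    (hg : StronglyMeasurable g) :
    ∫ u in Ioc a b, f u • g (∫ v in Ioc a u, f v ∂μ) ∂μ =
      ∫ x in 0..∫ v in Ioc a b, f v ∂μ, g x := by
  set G : ℝ → ℝ := fun x => ∫ v in Ioc a x, f v ∂μ
  have hG₀ : G a = 0 := by simp [G]
  have hfIoc : ∀ x ∈ Icc a b, IntegrableOn f (Ioc a x) μ := fun x hx =>
    hf.mono_set (Ioc_subset_Icc_self.trans (Icc_subset_Icc_right hx.2))
  have hf₀Ioc : ∀ x ∈ Icc a b, 0 ≤ᵐ[μ.restrict (Ioc a x)] f := fun x hx =>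
    ae_restrict_of_forall_mem measurableSet_Ioc fun u hu => hf₀ u ⟨hu.1, hu.2.trans hx.2⟩
  have hGc : ContinuousOn G (Icc a b) := intervalIntegral.continuousOn_primitive hf
  have hGm : MonotoneOn G (Icc a b) := fun x _ y hy hxy =>
    setIntegral_mono_set (hfIoc y hy) (hf₀Ioc y hy) (Ioc_subset_Ioc_right hxy).eventuallyLE
  set ρ := μ.withDensity fun u => ((f u).toNNReal : ℝ≥0∞)
  have hρ : ∀ x ∈ Icc a b, ρ (Ioc a x) = ENNReal.ofReal (G x - G a) := fun x hx => by
    rw [withDensity_apply _ measurableSet_Ioc, hG₀, sub_zero,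
      ofReal_integral_eq_lintegral_ofReal (hfIoc x hx) (hf₀Ioc x hx)]
    rfl
  calc ∫ u in Ioc a b, f u • g (G u) ∂μ = ∫ u in Ioc a b, g (G u) ∂ρ := by
        rw [setIntegral_withDensity_eq_setIntegral_smul₀
          (hf.mono_set Ioc_subset_Icc_self).aemeasurable.real_toNNReal _ measurableSet_Ioc]
        refine setIntegral_congr_fun measurableSet_Ioc fun u hu => ?_
        rw [NNReal.smul_def, Real.coe_toNNReal _ (hf₀ u hu)]
    _ = ∫ x in Ioc (G a) (G b), g x := by
        rw [← map_restrict_Ioc_eq_volume_restrict hab hGc hGm hρ,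
          integral_map ((hGc.mono Ioc_subset_Icc_self).aemeasurable measurableSet_Ioc)
            hg.aestronglyMeasurable]
    _ = ∫ x in 0..G b, g x := by
        rw [intervalIntegral.integral_of_le (hG₀ ▸ hGm ⟨le_rfl, hab⟩ ⟨hab, le_rfl⟩ hab),
          hG₀]

theorem StieltjesFunction.nullSingletonClass_measure {f : StieltjesFunction ℝ}
    (hf : Continuous f) : NullSingletonClass f.measure :=
  ⟨fun x => by
    rw [f.measure_singleton, hf.continuousWithinAt.leftLim_eq, sub_self, ENNReal.ofReal_zero]⟩

theorem stmt8_general (κ : StieltjesFunction ℝ) (hκc : Continuous κ)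
    (S : ℝ → ℝ) (hSc : Continuous S) (hSpos : ∀ u : ℝ, 0 ≤ u → 0 < S u)
    (n₀ : ℝ)
    (n : ℝ → ℝ)
    (hn : ∀ t : ℝ, n t
      = n₀ * Real.exp (-(∫ u in Set.Ioc (0:ℝ) t, (S u)⁻¹ ∂κ.measure))) :
    ∀ t : ℝ, 0 ≤ t →
      n₀ - n t = ∫ u in Set.Ioc (0:ℝ) t, n u / S u ∂κ.measure := by
  intro t ht
  have := κ.nullSingletonClass_measure hκc
  have hSinv : IntegrableOn (fun u => (S u)⁻¹) (Icc 0 t) κ.measure :=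
    (hSc.continuousOn.inv₀ fun u hu => (hSpos u hu.1).ne').integrableOn_compact isCompact_Icc
  have hsubst := setIntegral_smul_comp_primitive (g := fun x => Real.exp (-x)) ht hSinv
    (fun u hu => inv_nonneg.2 (hSpos u hu.1.le).le)
    (Real.continuous_exp.comp continuous_neg).stronglyMeasurable
  calc n₀ - n t
        = n₀ * ∫ x in (0:ℝ)..∫ u in Ioc 0 t, (S u)⁻¹ ∂κ.measure, Real.exp (-x) := by
        rw [hn, intervalIntegral.integral_comp_neg, integral_exp, neg_zero, Real.exp_zero]
        ring
    _ = ∫ u in Ioc 0 t, n u / S u ∂κ.measure := by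
        rw [← hsubst, ← integral_const_mul]
        refine setIntegral_congr_fun measurableSet_Ioc fun u _ => ?_
        simp only [hn, smul_eq_mul]
        ring

/-- Zero-sum funding identity: with `κ` a continuous nondecreasing singular
price-impact term (constant on `(-∞,0]`), `S` a continuous positive stock
price, and `n(t) = n₀ exp(-∫_{(0,t]} S(u)⁻¹ dκ(u))` the number of outstanding
stocks, one has `n₀ - n(t) = ∫_{(0,t]} (n(u)/S(u)) dκ(u)` for all `t ≥ 0`. -/
theorem stmt8 (κ : StieltjesFunction ℝ) (hκc : Continuous κ)
    (hκ0 : ∀ u : ℝ, u ≤ 0 → κ u = κ 0)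
    (S : ℝ → ℝ) (hSc : Continuous S) (hSpos : ∀ u : ℝ, 0 ≤ u → 0 < S u)
    (n₀ : ℝ) (hn₀ : 0 < n₀)
    (n : ℝ → ℝ)
    (hn : ∀ t : ℝ, n t
      = n₀ * Real.exp (-(∫ u in Set.Ioc (0:ℝ) t, (S u)⁻¹ ∂κ.measure))) :
    ∀ t : ℝ, 0 ≤ t →
      n₀ - n t = ∫ u in Set.Ioc (0:ℝ) t, n u / S u ∂κ.measure :=
  stmt8_general κ hκc S hSc hSpos n₀ n hn
end

section
/- Let Y : [0,∞) → ℝ be continuous with Y(u) > 0 for all u ≥ 0 and Y(u) → ∞ as u → ∞, and define the future infimum J(t) := inf_{u ≥ t} Y(u). Then J is a continuous nondecreasing positive function, and for every t ≥ 0, ∫_{(0,t]} Y(u)^{−1} d(μ_J)(u) = log(J(t)) − log(J(0)), where μ_J is the Lebesgue–Stieltjes measure of J. Consequently, with κ(t) := 2(J(t) − J(0)) and n₀ > 0, the funding strategy n(t) := n₀·exp( −∫_{(0,t]} Y(u)^{−1} d(μ_κ)(u) ) equals n₀·( J(0)/J(t) )². -/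
/-!
The future infimum is attained: `J t = Y w` for a minimiser `w` of `Y` on `[max t 0, ∞)`, which
exists because `Y → ∞`. For `t` in a bounded range all these minimisers lie in a fixed compact
window, so `J` is locally an infimum of a continuous family over a compact set, hence continuous.
Where `J u < Y u`, the minimisers for points just left of `u` lie beyond the points just right of
`u`, so `J` is locally constant there; hence `μ_J` is carried by `{J = Y}` and `Y⁻¹ = J⁻¹`
`μ_J`-a.e. Finally a continuous Stieltjes function pushes its measure on `(a, b]` forward to
Lebesgue measure on `(J a, J b]`, so `∫_{(0,t]} J⁻¹ dμ_J = ∫_{J 0}^{J t} x⁻¹ dx`.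
-/

open Set MeasureTheory Filter Topology

namespace StieltjesFunction

variable (f : StieltjesFunction ℝ) {a b : ℝ}

theorem measure_Ioc_inter_preimage_Iic (hf : Continuous f) (hab : a ≤ b) (x : ℝ) :
    f.measure (Ioc a b ∩ f ⁻¹' Iic x) = volume (Ioc (f a) (f b) ∩ Iic x) := by
  rcases lt_or_ge x (f a) with hx | hx
  · have hempty : Ioc a b ∩ f ⁻¹' Iic x = ∅ :=
      eq_empty_of_forall_notMem fun u hu => (hx.trans_le (f.mono hu.1.1.le)).not_ge hu.2
    rw [hempty, Ioc_inter_Iic, Ioc_eq_empty (min_le_right _ _ |>.trans_lt hx).not_gt]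
    simp
  set S := Icc a b ∩ f ⁻¹' Iic x
  have hS : IsCompact S := isCompact_Icc.inter_right (isClosed_le hf continuous_const)
  have hc : sSup S ∈ S := hS.sSup_mem ⟨a, ⟨le_rfl, hab⟩, hx⟩
  set c := sSup S
  have hcS : ∀ u ∈ S, u ≤ c := fun u hu => le_csSup hS.bddAbove hu
  -- `c` is the last point of `[a, b]` with `f ≤ x`: on `[c, b]`, `f = min (f b) x` only at `c`.
  have hfc : f c = min (f b) x := by
    obtain ⟨d, hd, hfd⟩ := intermediate_value_Icc hc.1.2 hf.continuousOn
      ⟨le_min (f.mono hc.1.2) hc.2, min_le_left _ _⟩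
    have hdS : d ∈ S := ⟨⟨hc.1.1.trans hd.1, hd.2⟩, hfd.trans_le (min_le_right _ _)⟩
    rw [← le_antisymm (hcS d hdS) hd.1, hfd]
  have hset : Ioc a b ∩ f ⁻¹' Iic x = Ioc a c := by
    ext u
    exact ⟨fun hu => ⟨hu.1.1, hcS u ⟨Ioc_subset_Icc_self hu.1, hu.2⟩⟩,
      fun hu => ⟨⟨hu.1, hu.2.trans hc.1.2⟩, (f.mono hu.2).trans hc.2⟩⟩
  rw [hset, f.measure_Ioc, Ioc_inter_Iic, Real.volume_Ioc, hfc]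

theorem map_measure_restrict_Ioc (hf : Continuous f) (hab : a ≤ b) :
    (f.measure.restrict (Ioc a b)).map f = volume.restrict (Ioc (f a) (f b)) := by
  have : IsFiniteMeasure (f.measure.restrict (Ioc a b)) :=
    isFiniteMeasure_restrict.2 (by simp [f.measure_Ioc])
  refine Measure.ext_of_Iic _ _ fun x => ?_
  rw [Measure.map_apply hf.measurable measurableSet_Iic,
    Measure.restrict_apply (hf.measurable measurableSet_Iic),
    Measure.restrict_apply measurableSet_Iic, inter_comm, inter_comm (Iic x),
    f.measure_Ioc_inter_preimage_Iic hf hab]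

theorem setIntegral_comp_Ioc {E : Type*} [NormedAddCommGroup E] [NormedSpace ℝ E]
    (hf : Continuous f) (hab : a ≤ b) {g : ℝ → E}
    (hg : AEStronglyMeasurable g (volume.restrict (Ioc (f a) (f b)))) :
    ∫ u in Ioc a b, g (f u) ∂f.measure = ∫ x in Ioc (f a) (f b), g x := by
  rw [← f.map_measure_restrict_Ioc hf hab] at hg ⊢
  exact (integral_map hf.aemeasurable hg).symm

end StieltjesFunction

theorem ContinuousOn.exists_isMinOn_Ici_of_tendsto_atTop {g : ℝ → ℝ} {a : ℝ}
    (hg : ContinuousOn g (Ici a)) (hg_top : Tendsto g atTop atTop) :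
    ∃ w ∈ Ici a, IsMinOn g (Ici a) w := by
  refine hg.exists_isMinOn' isClosed_Ici self_mem_Ici ?_
  rw [cocompact_eq_atBot_atTop, inf_sup_right, eventually_sup, eventually_inf_principal]
  exact ⟨(eventually_lt_atBot a).mono fun x hxa hx => absurd hx (not_le.2 hxa),
    (hg_top.eventually_ge_atTop (g a)).filter_mono inf_le_left⟩

noncomputable def futureInf (Y : ℝ → ℝ) (t : ℝ) : ℝ :=
  sInf (Y '' Ici (max t 0))

section FutureInf

variable {Y : ℝ → ℝ} (hYc : ContinuousOn Y (Ici 0)) (hYinf : Tendsto Y atTop atTop)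
include hYc hYinf

theorem exists_isMinOn_eq_futureInf (t : ℝ) :
    ∃ w ∈ Ici (max t 0), IsMinOn Y (Ici (max t 0)) w ∧ futureInf Y t = Y w := by
  obtain ⟨w, hw, hmin⟩ :=
    (hYc.mono (Ici_subset_Ici.2 (le_max_right t 0))).exists_isMinOn_Ici_of_tendsto_atTop hYinf
  exact ⟨w, hw, hmin, IsLeast.csInf_eq ⟨mem_image_of_mem Y hw, forall_mem_image.2 hmin⟩⟩

theorem futureInf_le {t u : ℝ} (htu : t ≤ u) (hu : 0 ≤ u) : futureInf Y t ≤ Y u := by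
  obtain ⟨w, -, hmin, hw⟩ := exists_isMinOn_eq_futureInf hYc hYinf t
  exact hw ▸ hmin (max_le htu hu)

theorem futureInf_mono : Monotone (futureInf Y) := fun s t hst => by
  obtain ⟨w, hw, -, hJw⟩ := exists_isMinOn_eq_futureInf hYc hYinf t
  exact hJw ▸ futureInf_le hYc hYinf (hst.trans ((le_max_left t 0).trans hw))
    ((le_max_right t 0).trans hw)

theorem futureInf_pos (hYpos : ∀ u, 0 ≤ u → 0 < Y u) (t : ℝ) : 0 < futureInf Y t := by
  obtain ⟨w, hw, -, hJw⟩ := exists_isMinOn_eq_futureInf hYc hYinf t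
  exact hJw ▸ hYpos w ((le_max_right t 0).trans hw)

theorem futureInf_continuous : Continuous (futureInf Y) := by
  refine continuous_iff_continuousAt.2 fun R => ?_
  obtain ⟨T, hT⟩ :=
    (hYinf.eventually_gt_atTop (Y (max (R + 1) 0))).exists_forall_of_atTop
  -- The `max`es make `f` continuous on `ℝ × ℝ`; for `s ∈ [0, T]` it is `Y (max t 0 + s)`.
  set f : ℝ → ℝ → ℝ := fun t s => Y (max t 0 + max s 0)
  have hf : Continuous ↿f := hYc.comp_continuous (by fun_prop) fun p =>
    mem_Ici.2 (add_nonneg (le_max_right _ _) (le_max_right _ _))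
  have hJf : ∀ t < R + 1, futureInf Y t = sInf (f t '' Icc 0 T) := by
    intro t ht
    obtain ⟨w, hw, hmin, hJw⟩ := exists_isMinOn_eq_futureInf hYc hYinf t
    have hwT : w < T := by
      by_contra! h
      exact (hmin (max_le_max_right 0 ht.le)).not_gt (hT w h)
    have hwt : 0 ≤ w - max t 0 := sub_nonneg.2 hw
    have hleast : IsLeast (f t '' Icc 0 T) (Y w) := by
      refine ⟨⟨w - max t 0, ⟨hwt, by linarith [le_max_right t 0]⟩, ?_⟩, ?_⟩
      · simp only [f, max_eq_left hwt, add_sub_cancel]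
      rintro _ ⟨s, hs, rfl⟩
      simp only [f, max_eq_left hs.1]
      exact hmin (mem_Ici.2 (le_add_of_nonneg_right hs.1))
    rw [hJw, hleast.csInf_eq]
  exact (isCompact_Icc.continuous_sInf hf).continuousAt.congr
    (eventually_of_mem (Iio_mem_nhds (lt_add_one R)) fun t ht => (hJf t ht).symm)

theorem exists_futureInf_sub_eq_add_of_lt {u : ℝ} (hu : 0 ≤ u) (hlt : futureInf Y u < Y u) :
    ∃ δ > 0, futureInf Y (u - δ) = futureInf Y (u + δ) := by
  obtain ⟨ε, hε, hball⟩ := Metric.mem_nhdsWithin_iff.1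
    (hYc.continuousWithinAt hu (Ioi_mem_nhds hlt))
  obtain ⟨w, hw, -, hJw⟩ := exists_isMinOn_eq_futureInf hYc hYinf (u - ε / 2)
  have hmono := futureInf_mono hYc hYinf
  have hw0 : 0 ≤ w := (le_max_right _ _).trans hw
  have hwu : u + ε / 2 ≤ w := by
    by_contra! h
    have hdist : dist w u < ε := by
      rw [Real.dist_eq, abs_lt]
      constructor <;> linarith [le_max_left (u - ε / 2) 0, mem_Ici.1 hw]
    have : futureInf Y u < Y w := hball ⟨hdist, hw0⟩
    linarith [hmono (show u - ε / 2 ≤ u by linarith)]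
  refine ⟨ε / 2, half_pos hε, le_antisymm (hmono (by linarith)) ?_⟩
  exact hJw ▸ futureInf_le hYc hYinf hwu hw0

theorem ae_futureInf_eq (F : StieltjesFunction ℝ) (hF : ⇑F = futureInf Y) :
    ∀ᵐ u ∂F.measure, 0 ≤ u → futureInf Y u = Y u := by
  rw [ae_iff]
  refine measure_null_of_locally_null _ fun u hu => ?_
  obtain ⟨hu0, hne⟩ := Classical.not_imp.1 hu
  obtain ⟨δ, hδ, hJδ⟩ := exists_futureInf_sub_eq_add_of_lt hYc hYinf hu0
    ((futureInf_le hYc hYinf le_rfl hu0).lt_of_ne hne)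
  refine ⟨Ioo (u - δ) (u + δ),
    mem_nhdsWithin_of_mem_nhds (Ioo_mem_nhds (by linarith) (by linarith)), ?_⟩
  refine measure_mono_null Ioo_subset_Ioc_self ?_
  rw [F.measure_Ioc, hF, hJδ, sub_self, ENNReal.ofReal_zero]

end FutureInf

/-- For `Y` continuous and positive on `[0,∞)` with `Y(u) → ∞`, the future
infimum `J(t) = inf_{u ≥ t} Y(u)` (extended constantly to `t < 0`) is a
continuous nondecreasing positive function, the Lebesgue–Stieltjes integral
satisfies `∫_{(0,t]} Y(u)⁻¹ dJ(u) = log J(t) - log J(0)`, and consequently the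
funding strategy `n(t) = n₀ exp(-∫_{(0,t]} Y(u)⁻¹ dκ(u))` with
`κ = 2(J - J(0))` equals `n₀ (J(0)/J(t))²`. -/
theorem stmt9 (Y : ℝ → ℝ) (hYc : ContinuousOn Y (Set.Ici 0))
    (hYpos : ∀ u : ℝ, 0 ≤ u → 0 < Y u)
    (hYinf : Filter.Tendsto Y Filter.atTop Filter.atTop)
    (J : ℝ → ℝ) (hJ : ∀ t : ℝ, J t = sInf (Y '' Set.Ici (max t 0))) :
    Continuous J ∧ Monotone J ∧ (∀ t : ℝ, 0 < J t) ∧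
    ∃ F : StieltjesFunction ℝ, (∀ t : ℝ, F t = J t) ∧
      (∀ t : ℝ, 0 ≤ t →
        (∫ u in Set.Ioc (0:ℝ) t, (Y u)⁻¹ ∂F.measure)
          = Real.log (J t) - Real.log (J 0)) ∧
      (∀ n₀ : ℝ, 0 < n₀ → ∀ t : ℝ, 0 ≤ t →
        n₀ * Real.exp
            (-(∫ u in Set.Ioc (0:ℝ) t, (Y u)⁻¹ ∂((2 : ENNReal) • F.measure)))
          = n₀ * (J 0 / J t) ^ 2) := by
  obtain rfl : J = futureInf Y := funext hJ
  have hmono := futureInf_mono hYc hYinf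
  have hcont := futureInf_continuous hYc hYinf
  have hpos := futureInf_pos hYc hYinf hYpos
  let F : StieltjesFunction ℝ := ⟨futureInf Y, hmono, fun _ => hcont.continuousWithinAt⟩
  have hlog : ∀ t, 0 ≤ t → ∫ u in Ioc 0 t, (Y u)⁻¹ ∂F.measure
      = Real.log (futureInf Y t) - Real.log (futureInf Y 0) := fun t ht => by
    have hYJ : ∀ᵐ u ∂F.measure, u ∈ Ioc 0 t → (Y u)⁻¹ = (F u)⁻¹ := by
      filter_upwards [ae_futureInf_eq hYc hYinf F rfl] with u hu hut
      rw [← hu hut.1.le]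
    rw [setIntegral_congr_ae measurableSet_Ioc hYJ,
      F.setIntegral_comp_Ioc hcont ht measurable_inv.aestronglyMeasurable,
      ← intervalIntegral.integral_of_le (hmono ht), integral_inv_of_pos (hpos 0) (hpos t),
      Real.log_div (hpos t).ne' (hpos 0).ne']
  refine ⟨hcont, hmono, hpos, F, fun _ => rfl, hlog, fun n₀ _ t ht => ?_⟩
  have hκ : ∫ u in Ioc 0 t, (Y u)⁻¹ ∂((2 : ENNReal) • F.measure)
      = 2 * (Real.log (futureInf Y t) - Real.log (futureInf Y 0)) := by
    rw [Measure.restrict_smul, integral_smul_measure, hlog t ht, ENNReal.toReal_ofNat,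
      smul_eq_mul]
  have hexp : -(2 * (Real.log (futureInf Y t) - Real.log (futureInf Y 0)))
      = Real.log ((futureInf Y 0 / futureInf Y t) ^ 2) := by
    rw [Real.log_pow, Real.log_div (hpos 0).ne' (hpos t).ne']
    push_cast
    ring
  rw [hκ, hexp, Real.exp_log (pow_pos (div_pos (hpos 0) (hpos t)) 2)]
end

section
/- Let L : ℝ → ℝ be a continuous nondecreasing function with L(u) = 0 for u ≤ 0, and let b > 0, c > 0, q ≥ 0. Set α := 1 + c and p := (1+q)·(1 + 1/c). Then for every t ≥ 0, exp( −(1+q)·∫_{(0,t]} α·(b + c·L(u))^{−1} d(μ_L)(u) ) = ( 1 + (c/b)·L(t) )^{−p}. -/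
open Set MeasureTheory

/-! A continuous nondecreasing `L` pushes `μ_L` restricted to `(0, t]` forward to Lebesgue
measure on `(0, L t]`, so the Stieltjes integral becomes the elementary integral
`∫₀^{L t} α (b + c s)⁻¹ ds = (α / c) log (1 + (c / b) L t)`, and `(1 + q) α / c = p`. -/

theorem Monotone.exists_le_iff_le_of_mem_Icc {L : ℝ → ℝ} (hL : Monotone L) {a t v : ℝ}
    (hat : a ≤ t) (hLc : ContinuousOn L (Icc a t)) (hv : v ∈ Icc (L a) (L t)) :
    ∃ y ∈ Icc a t, L y = v ∧ ∀ u ∈ Icc a t, L u ≤ v ↔ u ≤ y := by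
  obtain ⟨y, ⟨hy, hLy⟩, hy_max⟩ : ∃ y, IsGreatest (Icc a t ∩ L ⁻¹' {v}) y := by
    refine IsCompact.exists_isGreatest ?_ ?_
    · exact isCompact_Icc.of_isClosed_subset
        (hLc.preimage_isClosed_of_isClosed isClosed_Icc isClosed_singleton) inter_subset_left
    · obtain ⟨y, hy, hLy⟩ := intermediate_value_Icc hat hLc hv
      exact ⟨y, hy, hLy⟩
  refine ⟨y, hy, hLy, fun u hu => ⟨fun hLu => ?_, fun hyu => hLy ▸ hL hyu⟩⟩
  by_contra! hyu
  exact hyu.not_ge (hy_max ⟨hu, le_antisymm hLu (hLy ▸ hL hyu.le)⟩)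

namespace StieltjesFunction

theorem map_measure_restrict_Ioc_s10 (L : StieltjesFunction ℝ) {a t : ℝ}
    (hLc : ContinuousOn L (Icc a t)) :
    (L.measure.restrict (Ioc a t)).map L = volume.restrict (Ioc (L a) (L t)) := by
  have : IsFiniteMeasure (L.measure.restrict (Ioc a t)) := by
    rw [isFiniteMeasure_restrict, L.measure_Ioc]
    exact ENNReal.ofReal_ne_top
  refine Measure.ext_of_Iic _ _ fun v => ?_
  rw [Measure.map_apply L.mono.measurable measurableSet_Iic,
    Measure.restrict_apply (L.mono.measurable measurableSet_Iic),
    Measure.restrict_apply measurableSet_Iic]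
  rcases lt_or_ge v (L a) with hva | hav
  · have hL : L ⁻¹' Iic v ∩ Ioc a t = ∅ :=
      eq_empty_of_forall_notMem fun u ⟨hLu, hu⟩ => hva.not_ge ((L.mono hu.1.le).trans hLu)
    have hvol : Iic v ∩ Ioc (L a) (L t) = ∅ :=
      eq_empty_of_forall_notMem fun s ⟨hsv, hs⟩ => hva.not_ge (hs.1.le.trans hsv)
    rw [hL, hvol, measure_empty, measure_empty]
  rcases le_or_gt (L t) v with htv | hvt
  · have hL : L ⁻¹' Iic v ∩ Ioc a t = Ioc a t :=
      inter_eq_right.2 fun u hu => (L.mono hu.2).trans htv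
    have hvol : Iic v ∩ Ioc (L a) (L t) = Ioc (L a) (L t) :=
      inter_eq_right.2 fun s hs => hs.2.trans htv
    rw [hL, hvol, L.measure_Ioc, Real.volume_Ioc]
  · have hat : a ≤ t := (L.mono.reflect_lt (hav.trans_lt hvt)).le
    obtain ⟨y, hy, hLy, hiff⟩ := L.mono.exists_le_iff_le_of_mem_Icc hat hLc ⟨hav, hvt.le⟩
    have hL : L ⁻¹' Iic v ∩ Ioc a t = Ioc a y := by
      ext u
      simp only [mem_inter_iff, mem_preimage, mem_Iic, mem_Ioc]
      constructor
      · rintro ⟨hLu, hau, hut⟩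
        exact ⟨hau, (hiff u ⟨hau.le, hut⟩).1 hLu⟩
      · rintro ⟨hau, huy⟩
        exact ⟨(hiff u ⟨hau.le, huy.trans hy.2⟩).2 huy, hau, huy.trans hy.2⟩
    rw [hL, Iic_inter_Ioc_of_le hvt.le, L.measure_Ioc, Real.volume_Ioc, hLy]

theorem setIntegral_Ioc_comp {E : Type*} [NormedAddCommGroup E] [NormedSpace ℝ E]
    (L : StieltjesFunction ℝ) {a t : ℝ} (hLc : ContinuousOn L (Icc a t)) {g : ℝ → E}
    (hg : AEStronglyMeasurable g (volume.restrict (Ioc (L a) (L t)))) :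
    ∫ u in Ioc a t, g (L u) ∂L.measure = ∫ s in Ioc (L a) (L t), g s := by
  rw [← L.map_measure_restrict_Ioc_s10 hLc] at hg ⊢
  exact (integral_map L.mono.measurable.aemeasurable hg).symm

end StieltjesFunction

theorem integral_inv_add_mul {b c x : ℝ} (hb : 0 < b) (hc : c ≠ 0) (hx : 0 < b + c * x) :
    ∫ s in (0 : ℝ)..x, (b + c * s)⁻¹ = c⁻¹ * Real.log ((b + c * x) / b) := by
  rw [intervalIntegral.integral_comp_add_mul (fun s => s⁻¹) hc, mul_zero, add_zero,
    integral_inv_of_pos hb hx, smul_eq_mul]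

theorem stmt10_general (L : StieltjesFunction ℝ) (hLc : Continuous L)
    (hL0 : ∀ u : ℝ, u ≤ 0 → L u = 0)
    (b c q : ℝ) (hb : 0 < b) (hc : 0 < c)
    (α p : ℝ) (hα : α = 1 + c) (hp : p = (1 + q) * (1 + 1 / c)) :
    ∀ t : ℝ, 0 ≤ t →
      Real.exp (-((1 + q) *
          ∫ u in Set.Ioc (0:ℝ) t, α * (b + c * L u)⁻¹ ∂L.measure))
        = (1 + (c / b) * L t) ^ (-p) := by
  intro t ht
  have h0 : L 0 = 0 := hL0 0 le_rfl
  have hLt : 0 ≤ L t := h0 ▸ L.mono ht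
  have hbLt : 0 < b + c * L t := by positivity
  have hint : ∫ u in Ioc 0 t, α * (b + c * L u)⁻¹ ∂L.measure
      = α * c⁻¹ * Real.log (1 + c / b * L t) := by
    rw [L.setIntegral_Ioc_comp (g := fun s => α * (b + c * s)⁻¹) hLc.continuousOn
        (by fun_prop), h0,
      ← intervalIntegral.integral_of_le hLt, intervalIntegral.integral_const_mul,
      integral_inv_add_mul hb hc.ne' hbLt, ← mul_assoc]
    congr 2
    field_simp
  rw [hint, Real.rpow_def_of_pos (by positivity), hp, hα]
  congr 1
  field_simp
  ring

/-- Closed form for the repurchase strategy in the presence of an arbitrager: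
with `L` continuous nondecreasing, `L = 0` on `(-∞,0]`, `α = 1 + c` and
`p = (1+q)(1+1/c)`,
`exp(-(1+q) ∫_{(0,t]} α (b + c L(u))⁻¹ dL(u)) = (1 + (c/b) L(t))^{-p}`. -/
theorem stmt10 (L : StieltjesFunction ℝ) (hLc : Continuous L)
    (hL0 : ∀ u : ℝ, u ≤ 0 → L u = 0)
    (b c q : ℝ) (hb : 0 < b) (hc : 0 < c) (hq : 0 ≤ q)
    (α p : ℝ) (hα : α = 1 + c) (hp : p = (1 + q) * (1 + 1 / c)) :
    ∀ t : ℝ, 0 ≤ t →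
      Real.exp (-((1 + q) *
          ∫ u in Set.Ioc (0:ℝ) t, α * (b + c * L u)⁻¹ ∂L.measure))
        = (1 + (c / b) * L t) ^ (-p) :=
  stmt10_general L hLc hL0 b c q hb hc α p hα hp
end

section
/- Let L : ℝ → ℝ be a continuous nondecreasing function with L(u) = 0 for u ≤ 0, let b > 0, c > 0, n₀ > 0 and p > 1. Define n(u) := n₀·(1 + (c/b)·L(u))^{−p} and m(u) := n₀ − n(u), so that m is continuous, nondecreasing and m(0) = 0. Then for every t ≥ 0, ∫_{(0,t]} ( b + c·L(u) ) d(μ_m)(u) = ( p/(p−1) )·n₀·b·( 1 − (1 + (c/b)·L(t))^{1−p} ). -/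
open Set MeasureTheory

/-!
Write `m = g ∘ L` on `[0, t]` with `g y = n₀ - n₀ (1 + (c/b) y)^(-p)`. As `L` is continuous and
monotone, each sublevel set `{L ≤ x} ∩ (0, t]` is an interval `(0, s]` with `L s = min x (L t)`, so
`μ_m((0, t] ∩ {L ≤ x}) = g (min x (L t)) - g 0`: the image of `μ_m` restricted to `(0, t]` under
`L` is `g'(y) dy` on `(0, L t]`. The integral becomes `∫₀^{L t} g'(y) (b + c y) dy`, and
`g'(y) (b + c y) = n₀ p c (1 + (c/b) y)^(-p)` has the stated antiderivative.
-/

theorem lintegral_Ioc_ofReal_eq_sub_of_hasDerivAt {g g' : ℝ → ℝ} {a b : ℝ} (hab : a ≤ b)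
    (hg : ∀ y ∈ Icc a b, HasDerivAt g (g' y) y) (hg' : ContinuousOn g' (Icc a b))
    (hg'0 : ∀ y ∈ Ioc a b, 0 ≤ g' y) :
    ∫⁻ y in Ioc a b, ENNReal.ofReal (g' y) = ENNReal.ofReal (g b - g a) := by
  have hint : IntegrableOn g' (Ioc a b) :=
    hg'.integrableOn_Icc.mono_set Ioc_subset_Icc_self
  rw [← ofReal_integral_eq_lintegral_ofReal hint
      ((ae_restrict_iff' measurableSet_Ioc).2 (.of_forall hg'0)),
    ← intervalIntegral.integral_of_le hab,
    intervalIntegral.integral_eq_sub_of_hasDerivAt (fun y hy => hg y (uIcc_of_le hab ▸ hy))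
      (hg'.mono (uIcc_of_le hab).subset).intervalIntegrable]

theorem exists_preimage_Iic_inter_Ioc_eq_Ioc {L : ℝ → ℝ} {a t x : ℝ} (hat : a ≤ t)
    (hL : Monotone L) (hLc : ContinuousOn L (Icc a t)) (hx : L a ≤ x) :
    ∃ s ∈ Icc a t, L s = min x (L t) ∧ L ⁻¹' Iic x ∩ Ioc a t = Ioc a s := by
  set S := Icc a t ∩ L ⁻¹' Iic x
  have hS : IsCompact S :=
    isCompact_Icc.of_isClosed_subset (hLc.preimage_isClosed_of_isClosed isClosed_Icc isClosed_Iic)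
      inter_subset_left
  have haS : a ∈ S := ⟨⟨le_rfl, hat⟩, hx⟩
  obtain ⟨hsI, hsx⟩ : sSup S ∈ S := hS.sSup_mem ⟨a, haS⟩
  have le_sSup : ∀ u ∈ S, u ≤ sSup S := fun u hu => le_csSup hS.bddAbove hu
  refine ⟨sSup S, hsI, le_antisymm (le_min hsx (hL hsI.2)) ?_, ?_⟩
  · obtain ⟨u, hu, hLu⟩ := intermediate_value_Icc hat hLc ⟨le_min hx (hL hat), min_le_right _ _⟩
    exact hLu ▸ hL (le_sSup u ⟨hu, (hLu ▸ min_le_left _ _ : L u ≤ x)⟩)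
  · ext u
    refine ⟨fun ⟨hux, hu⟩ => ⟨hu.1, le_sSup u ⟨Ioc_subset_Icc_self hu, hux⟩⟩,
      fun hu => ⟨(hL hu.2).trans hsx, hu.1, hu.2.trans hsI.2⟩⟩

theorem map_restrict_Ioc_eq_withDensity {L g g' : ℝ → ℝ} {m : StieltjesFunction ℝ} {a t : ℝ}
    (hat : a ≤ t) (hL : Monotone L) (hLc : ContinuousOn L (Icc a t))
    (hm : ∀ u ∈ Icc a t, m u = g (L u)) (hg : ∀ y ∈ Icc (L a) (L t), HasDerivAt g (g' y) y)
    (hg' : ContinuousOn g' (Icc (L a) (L t))) (hg'0 : ∀ y ∈ Ioc (L a) (L t), 0 ≤ g' y) :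
    (m.measure.restrict (Ioc a t)).map L
      = (volume.restrict (Ioc (L a) (L t))).withDensity fun y => ENNReal.ofReal (g' y) := by
  have : IsFiniteMeasure (m.measure.restrict (Ioc a t)) := ⟨by simp [m.measure_Ioc]⟩
  refine Measure.ext_of_Iic _ _ fun x => ?_
  rw [Measure.map_apply hL.measurable measurableSet_Iic,
    Measure.restrict_apply (hL.measurable measurableSet_Iic),
    withDensity_apply _ measurableSet_Iic, Measure.restrict_restrict measurableSet_Iic,
    inter_comm (Iic x), Ioc_inter_Iic]
  rcases lt_or_ge x (L a) with hx | hx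
  · have hempty : L ⁻¹' Iic x ∩ Ioc a t = ∅ :=
      eq_empty_of_forall_notMem fun u ⟨hux, hu⟩ => (hx.trans_le (hL hu.1.le)).not_ge hux
    rw [hempty, Ioc_eq_empty ((min_le_right _ _).trans_lt hx).not_gt]
    simp
  · obtain ⟨s, hs, hLs, hpre⟩ := exists_preimage_Iic_inter_Ioc_eq_Ioc hat hL hLc hx
    have hsub : Icc (L a) (min (L t) x) ⊆ Icc (L a) (L t) := Icc_subset_Icc_right (min_le_left _ _)
    rw [hpre, m.measure_Ioc, hm s hs, hm a ⟨le_rfl, hat⟩, hLs, min_comm,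
      lintegral_Ioc_ofReal_eq_sub_of_hasDerivAt (le_min (hL hat) hx)
        (fun y hy => hg y (hsub hy)) (hg'.mono hsub)
        (fun y hy => hg'0 y (Ioc_subset_Ioc_right (min_le_left _ _) hy))]

theorem setIntegral_comp_stieltjes {L g g' f : ℝ → ℝ} {m : StieltjesFunction ℝ} {a t : ℝ}
    (hat : a ≤ t) (hL : Monotone L) (hLc : ContinuousOn L (Icc a t))
    (hm : ∀ u ∈ Icc a t, m u = g (L u)) (hg : ∀ y ∈ Icc (L a) (L t), HasDerivAt g (g' y) y)
    (hg' : ContinuousOn g' (Icc (L a) (L t))) (hg'0 : ∀ y ∈ Ioc (L a) (L t), 0 ≤ g' y)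
    (hf : Measurable f) :
    ∫ u in Ioc a t, f (L u) ∂m.measure = ∫ y in Ioc (L a) (L t), g' y * f y := by
  rw [← integral_map hL.measurable.aemeasurable hf.aestronglyMeasurable,
    map_restrict_Ioc_eq_withDensity hat hL hLc hm hg hg' hg'0,
    integral_withDensity_eq_integral_toReal_smul₀
      ((hg'.mono Ioc_subset_Icc_self).aemeasurable measurableSet_Ioc).ennreal_ofReal
      (.of_forall fun _ => ENNReal.ofReal_lt_top)]
  refine setIntegral_congr_fun measurableSet_Ioc fun y hy => ?_
  rw [ENNReal.toReal_ofReal (hg'0 y hy), smul_eq_mul]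

theorem hasDerivAt_one_add_mul_rpow {q r y : ℝ} (hy : 0 < 1 + q * y) :
    HasDerivAt (fun y => (1 + q * y) ^ r) (r * q * (1 + q * y) ^ (r - 1)) y := by
  have h := (((hasDerivAt_id y).const_mul q).const_add 1).rpow_const (p := r) (Or.inl hy.ne')
  exact h.congr_deriv (by simp only [id, mul_one]; ring)

theorem integral_Ioc_rpow_mul_affine {b c n₀ p T : ℝ} (hb : 0 < b) (hc : 0 ≤ c) (hp : p ≠ 1)
    (hT : 0 ≤ T) :
    ∫ y in Ioc 0 T, n₀ * p * (c / b) * (1 + c / b * y) ^ (-p - 1) * (b + c * y)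
      = p / (p - 1) * n₀ * b * (1 - (1 + c / b * T) ^ (1 - p)) := by
  have hbase : ∀ y ∈ Icc 0 T, 0 < 1 + c / b * y := fun y hy => by
    have := hy.1; positivity
  have hderiv : ∀ y ∈ Icc 0 T,
      HasDerivAt (fun y => p / (p - 1) * n₀ * b * (1 - (1 + c / b * y) ^ (1 - p)))
      (n₀ * p * (c / b) * (1 + c / b * y) ^ (-p - 1) * (b + c * y)) y := fun y hy => by
    have h := ((hasDerivAt_one_add_mul_rpow (r := 1 - p) (hbase y hy)).const_sub 1).const_mul
      (p / (p - 1) * n₀ * b)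
    refine h.congr_deriv ?_
    have hp1 : p - 1 ≠ 0 := sub_ne_zero.2 hp
    have hz : (1 + c / b * y) ≠ 0 := (hbase y hy).ne'
    have hprice : b + c * y = b * (1 + c / b * y) := by field_simp
    rw [show 1 - p - 1 = -p by ring, Real.rpow_sub_one hz, hprice]
    generalize 1 + c / b * y = z at hz ⊢
    field_simp
    ring
  have hcont : ContinuousOn (fun y => n₀ * p * (c / b) * (1 + c / b * y) ^ (-p - 1) * (b + c * y))
      (Icc 0 T) :=
    (continuousOn_const.mul (ContinuousOn.rpow_const (by fun_prop)
      fun y hy => Or.inl (hbase y hy).ne')).mul (by fun_prop)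
  rw [← intervalIntegral.integral_of_le hT,
    intervalIntegral.integral_eq_sub_of_hasDerivAt (fun y hy => hderiv y (uIcc_of_le hT ▸ hy))
      (hcont.mono (uIcc_of_le hT).subset).intervalIntegrable]
  simp

/-- Money spent to repurchase stocks: with `L` continuous nondecreasing,
`L = 0` on `(-∞,0]`, `n(u) = n₀ (1 + (c/b) L(u))^{-p}` and `m = n₀ - n`,
`∫_{(0,t]} (b + c L(u)) dm(u)
  = (p/(p-1)) n₀ b (1 - (1 + (c/b) L(t))^{1-p})`. -/
theorem stmt11 (L : StieltjesFunction ℝ) (hLc : Continuous L)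
    (hL0 : ∀ u : ℝ, u ≤ 0 → L u = 0)
    (b c n₀ p : ℝ) (hb : 0 < b) (hc : 0 < c) (hn₀ : 0 < n₀) (hp : 1 < p)
    (m : StieltjesFunction ℝ)
    (hm : ∀ u : ℝ, m u = n₀ - n₀ * (1 + (c / b) * L u) ^ (-p)) :
    ∀ t : ℝ, 0 ≤ t →
      (∫ u in Set.Ioc (0:ℝ) t, (b + c * L u) ∂m.measure)
        = (p / (p - 1)) * n₀ * b * (1 - (1 + (c / b) * L t) ^ (1 - p)) := by
  intro t ht
  have hL00 : L 0 = 0 := hL0 0 le_rfl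
  have hbase : ∀ y ∈ Icc (L 0) (L t), 0 < 1 + c / b * y := fun y hy => by
    have : 0 ≤ y := hL00 ▸ hy.1
    positivity
  have hderiv : ∀ y ∈ Icc (L 0) (L t), HasDerivAt (fun y => n₀ - n₀ * (1 + c / b * y) ^ (-p))
      (n₀ * p * (c / b) * (1 + c / b * y) ^ (-p - 1)) y := fun y hy =>
    (((hasDerivAt_one_add_mul_rpow (hbase y hy)).const_mul n₀).const_sub n₀).congr_deriv (by ring)
  have hcont : ContinuousOn (fun y => n₀ * p * (c / b) * (1 + c / b * y) ^ (-p - 1))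
      (Icc (L 0) (L t)) :=
    continuousOn_const.mul (ContinuousOn.rpow_const (by fun_prop)
      fun y hy => Or.inl (hbase y hy).ne')
  have hnonneg : ∀ y ∈ Ioc (L 0) (L t), 0 ≤ n₀ * p * (c / b) * (1 + c / b * y) ^ (-p - 1) :=
    fun y hy => by
      have := (hbase y (Ioc_subset_Icc_self hy)).le
      positivity
  rw [setIntegral_comp_stieltjes (f := fun y => b + c * y) ht L.mono hLc.continuousOn
    (fun u _ => hm u) hderiv hcont hnonneg (by fun_prop), hL00]
  exact integral_Ioc_rpow_mul_affine hb hc.le (by linarith) (hL00 ▸ L.mono ht)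
end
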